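/- arXiv:2107.01127 — 5 statements merged into one kernel-verified Lean document; each statement's English description precedes it below -/
import Mathlib

section
/- Fix I ∈ ℕ with I ≥ 1, a mesh size h > 0 with I·h = 1, a time step Δt > 0, an L-Lipschitz function f : ℝ → ℝ, N_T ∈ ℕ, and T > 0 with N_T·Δt ≤ T. Suppose V : ℕ → (ZMod I → ℝ) satisfies the upwind scheme V^{n+1}_i = V^n_i − (Δt/h)(f(V^n_i) − f(V^n_{i−1})), and 𝒩 : ℕ → (ZMod I → ℝ) satisfies |𝒩^n_i − V^n_i| ≤ δ for all n ≤ N_T and all i ∈ ZMod I, where δ ≥ 0. Then the discrete loss satisfies ( h·Δt · Σ_{i ∈ ZMod I} Σ_{n=0}^{N_T−1} (ℐ^n_i)² )^{1/2} ≤ √T · (2/Δt + 2L/h) · δ, where ℐ^n_i = (𝒩^{n+1}_i − 𝒩^n_i)/Δt + (f(𝒩^n_i) − f(𝒩^n_{i−1}))/h. -/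
/-- Consistency of the loss function: if `𝒩` is uniformly `δ`-close to a
solution `V` of the upwind scheme up to time step `N_T`, then the discrete
`ℓ²` loss is bounded by `√T · (2/Δt + 2L/h) · δ`. -/
theorem upwind_loss_bound
    (I : ℕ) [NeZero I] (hI : 1 ≤ I)
    (h Δt : ℝ) (hh : 0 < h) (hΔt : 0 < Δt) (hIh : (I : ℝ) * h = 1)
    (L : ℝ) (f : ℝ → ℝ) (hf : ∀ x y : ℝ, |f x - f y| ≤ L * |x - y|)
    (NT : ℕ) (T : ℝ) (hT : 0 < T) (hNT : (NT : ℝ) * Δt ≤ T)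
    (V 𝒩 : ℕ → ZMod I → ℝ) (δ : ℝ) (hδ : 0 ≤ δ)
    (hV : ∀ (n : ℕ) (i : ZMod I),
      V (n + 1) i = V n i - (Δt / h) * (f (V n i) - f (V n (i - 1))))
    (h𝒩 : ∀ n ≤ NT, ∀ i : ZMod I, |𝒩 n i - V n i| ≤ δ) :
    Real.sqrt (h * Δt *
        ∑ i : ZMod I, ∑ n ∈ Finset.range NT,
          ((𝒩 (n + 1) i - 𝒩 n i) / Δt + (f (𝒩 n i) - f (𝒩 n (i - 1))) / h) ^ 2) ≤
      Real.sqrt T * (2 / Δt + 2 * L / h) * δ := by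
  have hL : 0 ≤ L := by
    have h1 := hf 0 1
    have h2 : |(0:ℝ) - 1| = 1 := by norm_num
    rw [h2, mul_one] at h1
    exact le_trans (abs_nonneg _) h1
  set M : ℝ := (2 / Δt + 2 * L / h) * δ with hMdef
  have hM0 : 0 ≤ M := by
    apply mul_nonneg _ hδ
    positivity
  have key : ∀ n ∈ Finset.range NT, ∀ i : ZMod I,
      ((𝒩 (n + 1) i - 𝒩 n i) / Δt + (f (𝒩 n i) - f (𝒩 n (i - 1))) / h) ^ 2 ≤ M ^ 2 := by
    intro n hn i
    rw [Finset.mem_range] at hn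
    have hVeq : (V (n+1) i - V n i) / Δt + (f (V n i) - f (V n (i-1))) / h = 0 := by
      rw [hV n i]; field_simp; ring
    have e1 : |𝒩 (n+1) i - V (n+1) i| ≤ δ := h𝒩 (n+1) hn i
    have e2 : |𝒩 n i - V n i| ≤ δ := h𝒩 n hn.le i
    have e3 : |f (𝒩 n i) - f (V n i)| ≤ L * δ :=
      le_trans (hf _ _) (mul_le_mul_of_nonneg_left e2 hL)
    have e4 : |f (𝒩 n (i-1)) - f (V n (i-1))| ≤ L * δ :=
      le_trans (hf _ _) (mul_le_mul_of_nonneg_left (h𝒩 n hn.le (i-1)) hL)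
    have hrw : (𝒩 (n + 1) i - 𝒩 n i) / Δt + (f (𝒩 n i) - f (𝒩 n (i - 1))) / h
        = ((𝒩 (n+1) i - V (n+1) i) - (𝒩 n i - V n i)) / Δt
          + ((f (𝒩 n i) - f (V n i)) - (f (𝒩 n (i-1)) - f (V n (i-1)))) / h := by
      linear_combination hVeq
    have habs : |(𝒩 (n + 1) i - 𝒩 n i) / Δt + (f (𝒩 n i) - f (𝒩 n (i - 1))) / h| ≤ M := by
      rw [hrw]
      calc |((𝒩 (n+1) i - V (n+1) i) - (𝒩 n i - V n i)) / Δt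
          + ((f (𝒩 n i) - f (V n i)) - (f (𝒩 n (i-1)) - f (V n (i-1)))) / h|
          ≤ |((𝒩 (n+1) i - V (n+1) i) - (𝒩 n i - V n i)) / Δt|
            + |((f (𝒩 n i) - f (V n i)) - (f (𝒩 n (i-1)) - f (V n (i-1)))) / h| :=
          abs_add_le _ _
        _ = |(𝒩 (n+1) i - V (n+1) i) - (𝒩 n i - V n i)| / Δt
            + |(f (𝒩 n i) - f (V n i)) - (f (𝒩 n (i-1)) - f (V n (i-1)))| / h := by
          rw [abs_div, abs_div, abs_of_pos hΔt, abs_of_pos hh]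
        _ ≤ (δ + δ) / Δt + (L * δ + L * δ) / h := by
          gcongr
          · exact le_trans (abs_sub _ _) (add_le_add e1 e2)
          · exact le_trans (abs_sub _ _) (add_le_add e3 e4)
        _ = M := by rw [hMdef]; field_simp; ring
    have := abs_le.mp habs
    exact sq_le_sq' this.1 this.2
  have hsum : ∑ i : ZMod I, ∑ n ∈ Finset.range NT,
      ((𝒩 (n + 1) i - 𝒩 n i) / Δt + (f (𝒩 n i) - f (𝒩 n (i - 1))) / h) ^ 2
      ≤ (I : ℝ) * (NT * M ^ 2) := by
    calc ∑ i : ZMod I, ∑ n ∈ Finset.range NT,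
        ((𝒩 (n + 1) i - 𝒩 n i) / Δt + (f (𝒩 n i) - f (𝒩 n (i - 1))) / h) ^ 2
        ≤ ∑ _i : ZMod I, ∑ _n ∈ Finset.range NT, M ^ 2 := by
          apply Finset.sum_le_sum
          intro i _
          exact Finset.sum_le_sum (fun n hn => key n hn i)
      _ = (I : ℝ) * (NT * M ^ 2) := by
          simp [Finset.sum_const, Finset.card_univ, ZMod.card, mul_assoc]
  have hbound : h * Δt *
      (∑ i : ZMod I, ∑ n ∈ Finset.range NT,
        ((𝒩 (n + 1) i - 𝒩 n i) / Δt + (f (𝒩 n i) - f (𝒩 n (i - 1))) / h) ^ 2)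
      ≤ T * M ^ 2 := by
    calc h * Δt * (∑ i : ZMod I, ∑ n ∈ Finset.range NT,
          ((𝒩 (n + 1) i - 𝒩 n i) / Δt + (f (𝒩 n i) - f (𝒩 n (i - 1))) / h) ^ 2)
        ≤ h * Δt * ((I : ℝ) * (NT * M ^ 2)) := by
          apply mul_le_mul_of_nonneg_left hsum (by positivity)
      _ = ((I : ℝ) * h) * ((NT : ℝ) * Δt) * M ^ 2 := by ring
      _ = ((NT : ℝ) * Δt) * M ^ 2 := by rw [hIh, one_mul]
      _ ≤ T * M ^ 2 := mul_le_mul_of_nonneg_right hNT (sq_nonneg M)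
  calc Real.sqrt (h * Δt *
        ∑ i : ZMod I, ∑ n ∈ Finset.range NT,
          ((𝒩 (n + 1) i - 𝒩 n i) / Δt + (f (𝒩 n i) - f (𝒩 n (i - 1))) / h) ^ 2)
      ≤ Real.sqrt (T * M ^ 2) := Real.sqrt_le_sqrt hbound
    _ = Real.sqrt T * M := by
        rw [Real.sqrt_mul hT.le, Real.sqrt_sq hM0]
    _ = Real.sqrt T * (2 / Δt + 2 * L / h) * δ := by rw [hMdef, mul_assoc]
end

section
/- Fix I ∈ ℕ with I ≥ 1, a mesh size h > 0, a time step Δt > 0, and set λ = Δt/h. Let f : ℝ → ℝ be differentiable with 0 ≤ f'(x) and λ·f'(x) ≤ 1 for every x ∈ ℝ (the CFL condition). Let U : ℕ → (ZMod I → ℝ) satisfy the upwind scheme U^{n+1}_i = U^n_i − λ(f(U^n_i) − f(U^n_{i−1})), and let 𝒩 : ℕ → (ZMod I → ℝ) be arbitrary with residual ℐ^n_i = (𝒩^{n+1}_i − 𝒩^n_i)/Δt + (f(𝒩^n_i) − f(𝒩^n_{i−1}))/h. Then for every n ∈ ℕ, (1/I)·Σ_{i ∈ ZMod I} |𝒩^n_i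 − U^n_i| ≤ (1/I)·Σ_{i ∈ ZMod I} |𝒩^0_i − U^0_i| + Δt · Σ_{m=0}^{n−1} (1/I)·Σ_{i ∈ ZMod I} |ℐ^m_i|. In particular, if (1/I)·Σ_i |ℐ^m_i| ≤ Cδ for all m < n and n·Δt ≤ T, then the averaged ℓ¹ error at step n is at most (1/I)·Σ_i |𝒩^0_i − U^0_i| + C·T·δ. -/
open Finset

lemma upwind_slope_aux {f : ℝ → ℝ} (hf : Differentiable ℝ f) {a b : ℝ} (hab : a < b) :
    ∃ c : ℝ, f b - f a = deriv f c * (b - a) := by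
  obtain ⟨c, _, hc⟩ := exists_deriv_eq_slope f hab hf.continuous.continuousOn
    hf.differentiableOn
  exact ⟨c, by rw [hc, div_mul_cancel₀ _ (by linarith : b - a ≠ 0)]⟩

lemma upwind_slope_exists {f : ℝ → ℝ} (hf : Differentiable ℝ f) (a b : ℝ) :
    ∃ c : ℝ, f a - f b = deriv f c * (a - b) := by
  rcases lt_trichotomy a b with hab | rfl | hab
  · obtain ⟨c, hc⟩ := upwind_slope_aux hf hab
    exact ⟨c, by linear_combination -hc⟩
  · exact ⟨a, by simp⟩
  · exact upwind_slope_aux hf hab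

lemma upwind_slope_bounded {lam : ℝ} (hlam : 0 ≤ lam) {f : ℝ → ℝ}
    (hf : Differentiable ℝ f) (hf' : ∀ x : ℝ, 0 ≤ deriv f x)
    (hcfl : ∀ x : ℝ, lam * deriv f x ≤ 1) (a b : ℝ) :
    ∃ g : ℝ, f a - f b = g * (a - b) ∧ 0 ≤ lam * g ∧ lam * g ≤ 1 := by
  obtain ⟨c, hc⟩ := upwind_slope_exists hf a b
  exact ⟨deriv f c, hc, mul_nonneg hlam (hf' c), hcfl c⟩

/-- Stability/convergence of the upwind scheme: the averaged `ℓ¹` error of `𝒩`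
against the upwind solution `U` at step `n` is bounded by the initial error
plus `Δt` times the accumulated averaged `ℓ¹` norms of the residuals; in
particular, if the averaged residuals are bounded by `C·δ` and `n·Δt ≤ T`,
the error is at most the initial error plus `C·T·δ`. -/
theorem upwind_l1_error_estimate
    (I : ℕ) [NeZero I] (hI : 1 ≤ I)
    (h Δt lam : ℝ) (hh : 0 < h) (hΔt : 0 < Δt) (hlam : lam = Δt / h)
    (f : ℝ → ℝ) (hf : Differentiable ℝ f)
    (hf' : ∀ x : ℝ, 0 ≤ deriv f x) (hcfl : ∀ x : ℝ, lam * deriv f x ≤ 1)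
    (U 𝒩 : ℕ → ZMod I → ℝ)
    (hU : ∀ (n : ℕ) (i : ZMod I),
      U (n + 1) i = U n i - lam * (f (U n i) - f (U n (i - 1))))
    (ℐ : ℕ → ZMod I → ℝ)
    (hℐ : ∀ (n : ℕ) (i : ZMod I),
      ℐ n i = (𝒩 (n + 1) i - 𝒩 n i) / Δt + (f (𝒩 n i) - f (𝒩 n (i - 1))) / h) :
    (∀ n : ℕ,
      (1 / (I : ℝ)) * ∑ i : ZMod I, |𝒩 n i - U n i| ≤
        (1 / (I : ℝ)) * ∑ i : ZMod I, |𝒩 0 i - U 0 i| +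
          Δt * ∑ m ∈ Finset.range n, (1 / (I : ℝ)) * ∑ i : ZMod I, |ℐ m i|) ∧
    (∀ (n : ℕ) (C δ T : ℝ), 0 ≤ C → 0 ≤ δ →
      (∀ m < n, (1 / (I : ℝ)) * ∑ i : ZMod I, |ℐ m i| ≤ C * δ) →
      (n : ℝ) * Δt ≤ T →
      (1 / (I : ℝ)) * ∑ i : ZMod I, |𝒩 n i - U n i| ≤
        (1 / (I : ℝ)) * ∑ i : ZMod I, |𝒩 0 i - U 0 i| + C * T * δ) := by
  have hlam0 : 0 ≤ lam := by rw [hlam]; positivity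
  have hIinv : (0:ℝ) ≤ 1 / (I : ℝ) := by positivity
  -- one-step ℓ¹ contraction
  have step : ∀ n : ℕ, ∑ i : ZMod I, |𝒩 (n+1) i - U (n+1) i| ≤
      ∑ i : ZMod I, |𝒩 n i - U n i| + Δt * ∑ i : ZMod I, |ℐ n i| := by
    intro n
    choose g hg hg0 hg1 using fun i : ZMod I =>
      upwind_slope_bounded hlam0 hf hf' hcfl (𝒩 n i) (U n i)
    have key : ∀ i : ZMod I, |𝒩 (n+1) i - U (n+1) i| ≤
        (1 - lam * g i) * |𝒩 n i - U n i| +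
          (lam * g (i-1)) * |𝒩 n (i-1) - U n (i-1)| + Δt * |ℐ n i| := by
      intro i
      have hN : 𝒩 (n+1) i = 𝒩 n i + Δt * ℐ n i
          - lam * (f (𝒩 n i) - f (𝒩 n (i-1))) := by
        have hid := hℐ n i
        rw [hlam]
        field_simp at hid ⊢
        linarith
      have e : 𝒩 (n+1) i - U (n+1) i =
          (1 - lam * g i) * (𝒩 n i - U n i) +
            (lam * g (i-1)) * (𝒩 n (i-1) - U n (i-1)) + Δt * ℐ n i := by
        rw [hN, hU n i]
        linear_combination (-lam) * hg i + lam * hg (i-1)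
      rw [e]
      have t1 : |(1 - lam * g i) * (𝒩 n i - U n i)|
          = (1 - lam * g i) * |𝒩 n i - U n i| := by
        rw [abs_mul, abs_of_nonneg (by linarith [hg1 i])]
      have t2 : |(lam * g (i-1)) * (𝒩 n (i-1) - U n (i-1))|
          = (lam * g (i-1)) * |𝒩 n (i-1) - U n (i-1)| := by
        rw [abs_mul, abs_of_nonneg (hg0 (i-1))]
      have t3 : |Δt * ℐ n i| = Δt * |ℐ n i| := by
        rw [abs_mul, abs_of_nonneg hΔt.le]
      calc |(1 - lam * g i) * (𝒩 n i - U n i) +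
            (lam * g (i-1)) * (𝒩 n (i-1) - U n (i-1)) + Δt * ℐ n i|
          ≤ |(1 - lam * g i) * (𝒩 n i - U n i) +
            (lam * g (i-1)) * (𝒩 n (i-1) - U n (i-1))| + |Δt * ℐ n i| :=
            abs_add_le _ _
        _ ≤ |(1 - lam * g i) * (𝒩 n i - U n i)| +
            |(lam * g (i-1)) * (𝒩 n (i-1) - U n (i-1))| + |Δt * ℐ n i| := by
            have := abs_add_le ((1 - lam * g i) * (𝒩 n i - U n i))
              ((lam * g (i-1)) * (𝒩 n (i-1) - U n (i-1)))
            linarith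
        _ = _ := by rw [t1, t2, t3]
    have reindex : ∑ i : ZMod I, (lam * g (i-1)) * |𝒩 n (i-1) - U n (i-1)|
        = ∑ i : ZMod I, (lam * g i) * |𝒩 n i - U n i| :=
      Fintype.sum_equiv (Equiv.subRight (1 : ZMod I)) _ _ (fun i => rfl)
    calc ∑ i : ZMod I, |𝒩 (n+1) i - U (n+1) i|
        ≤ ∑ i : ZMod I, ((1 - lam * g i) * |𝒩 n i - U n i| +
            (lam * g (i-1)) * |𝒩 n (i-1) - U n (i-1)| + Δt * |ℐ n i|) :=
          Finset.sum_le_sum fun i _ => key i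
      _ = ∑ i : ZMod I, (1 - lam * g i) * |𝒩 n i - U n i| +
            ∑ i : ZMod I, (lam * g (i-1)) * |𝒩 n (i-1) - U n (i-1)| +
            ∑ i : ZMod I, Δt * |ℐ n i| := by
          rw [Finset.sum_add_distrib, Finset.sum_add_distrib]
      _ = ∑ i : ZMod I, ((1 - lam * g i) * |𝒩 n i - U n i| +
            (lam * g i) * |𝒩 n i - U n i|) + Δt * ∑ i : ZMod I, |ℐ n i| := by
          rw [reindex, ← Finset.sum_add_distrib, Finset.mul_sum]
      _ = ∑ i : ZMod I, |𝒩 n i - U n i| + Δt * ∑ i : ZMod I, |ℐ n i| := by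
          congr 1
          exact Finset.sum_congr rfl fun i _ => by ring
  -- induction
  have main : ∀ n : ℕ, ∑ i : ZMod I, |𝒩 n i - U n i| ≤
      ∑ i : ZMod I, |𝒩 0 i - U 0 i| +
        Δt * ∑ m ∈ Finset.range n, ∑ i : ZMod I, |ℐ m i| := by
    intro n
    induction n with
    | zero => simp
    | succ n ih =>
      have := step n
      rw [Finset.sum_range_succ, mul_add]
      linarith
  have part1 : ∀ n : ℕ,
      (1 / (I : ℝ)) * ∑ i : ZMod I, |𝒩 n i - U n i| ≤
        (1 / (I : ℝ)) * ∑ i : ZMod I, |𝒩 0 i - U 0 i| +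
          Δt * ∑ m ∈ Finset.range n, (1 / (I : ℝ)) * ∑ i : ZMod I, |ℐ m i| := by
    intro n
    have := mul_le_mul_of_nonneg_left (main n) hIinv
    calc (1 / (I : ℝ)) * ∑ i : ZMod I, |𝒩 n i - U n i|
        ≤ (1 / (I : ℝ)) * (∑ i : ZMod I, |𝒩 0 i - U 0 i| +
            Δt * ∑ m ∈ Finset.range n, ∑ i : ZMod I, |ℐ m i|) := this
      _ = (1 / (I : ℝ)) * ∑ i : ZMod I, |𝒩 0 i - U 0 i| +
            Δt * ∑ m ∈ Finset.range n, (1 / (I : ℝ)) * ∑ i : ZMod I, |ℐ m i| := by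
          rw [← Finset.mul_sum]; ring
  refine ⟨part1, ?_⟩
  intro n C δ T hC hδ hres hT
  have h2 : Δt * ∑ m ∈ Finset.range n, (1 / (I : ℝ)) * ∑ i : ZMod I, |ℐ m i|
      ≤ C * T * δ := by
    have hsum : ∑ m ∈ Finset.range n, (1 / (I : ℝ)) * ∑ i : ZMod I, |ℐ m i|
        ≤ (n : ℝ) * (C * δ) := by
      calc ∑ m ∈ Finset.range n, (1 / (I : ℝ)) * ∑ i : ZMod I, |ℐ m i|
          ≤ ∑ _m ∈ Finset.range n, C * δ :=
            Finset.sum_le_sum fun m hm => hres m (Finset.mem_range.mp hm)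
        _ = (n : ℝ) * (C * δ) := by simp [mul_comm]
    have hCδ : 0 ≤ C * δ := mul_nonneg hC hδ
    calc Δt * ∑ m ∈ Finset.range n, (1 / (I : ℝ)) * ∑ i : ZMod I, |ℐ m i|
        ≤ Δt * ((n : ℝ) * (C * δ)) := by
          exact mul_le_mul_of_nonneg_left hsum hΔt.le
      _ = ((n : ℝ) * Δt) * (C * δ) := by ring
      _ ≤ T * (C * δ) := mul_le_mul_of_nonneg_right hT hCδ
      _ = C * T * δ := by ring
  linarith [part1 n]
end

section
/- Fix I ∈ ℕ with I ≥ 1, a mesh size h > 0, a time step Δt > 0, and set λ = Δt/h. Let f : ℝ → ℝ be differentiable with 0 ≤ f'(x) and λ·f'(x) ≤ 1 for every x ∈ ℝ. Let U : ℕ → (ZMod I → ℝ) satisfy the upwind scheme U^{n+1}_i = U^n_i − λ(f(U^n_i) − f(U^n_{i−1})), and let 𝒩 : ℕ → (ZMod I → ℝ) have residual ℐ^n_i = (𝒩^{n+1}_i − 𝒩^n_i)/Δt + (f(𝒩^n_i) − f(𝒩^n_{i−1}))/h. Then for every n ∈ ℕ, (1/I)·Σ_{i ∈ ZMod I} |𝒩^n_i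 − U^n_i| ≤ (1/I)·Σ_{i ∈ ZMod I} |𝒩^0_i − U^0_i| + √(n·Δt) · ( Δt · Σ_{m=0}^{n−1} (1/I)·Σ_{i ∈ ZMod I} (ℐ^m_i)² )^{1/2}; i.e., the averaged ℓ¹ error at any step is bounded by the initial error plus √(n·Δt) times the discrete ℓ² loss of the residuals. -/
/-- The averaged `ℓ¹` error of `𝒩` against the upwind solution `U` at any step
`n` is bounded by the initial error plus `√(n·Δt)` times the discrete `ℓ²`
loss of the residuals. -/
theorem upwind_l1_error_le_loss
    (I : ℕ) [NeZero I] (hI : 1 ≤ I)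
    (h Δt lam : ℝ) (hh : 0 < h) (hΔt : 0 < Δt) (hlam : lam = Δt / h)
    (f : ℝ → ℝ) (hf : Differentiable ℝ f)
    (hf' : ∀ x : ℝ, 0 ≤ deriv f x) (hcfl : ∀ x : ℝ, lam * deriv f x ≤ 1)
    (U 𝒩 : ℕ → ZMod I → ℝ)
    (hU : ∀ (n : ℕ) (i : ZMod I),
      U (n + 1) i = U n i - lam * (f (U n i) - f (U n (i - 1))))
    (ℐ : ℕ → ZMod I → ℝ)
    (hℐ : ∀ (n : ℕ) (i : ZMod I),
      ℐ n i = (𝒩 (n + 1) i - 𝒩 n i) / Δt + (f (𝒩 n i) - f (𝒩 n (i - 1))) / h) :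
    ∀ n : ℕ,
      (1 / (I : ℝ)) * ∑ i : ZMod I, |𝒩 n i - U n i| ≤
        (1 / (I : ℝ)) * ∑ i : ZMod I, |𝒩 0 i - U 0 i| +
          Real.sqrt ((n : ℝ) * Δt) *
            Real.sqrt (Δt *
              ∑ m ∈ Finset.range n, (1 / (I : ℝ)) * ∑ i : ZMod I, (ℐ m i) ^ 2) := by
  have hlam0 : 0 < lam := by rw [hlam]; positivity
  have hI0 : (0 : ℝ) < (I : ℝ) := by exact_mod_cast Nat.pos_of_ne_zero (NeZero.ne I)
  -- monotonicity facts
  have hmono : Monotone f := monotone_of_deriv_nonneg hf hf'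
  have hgdiff : Differentiable ℝ (fun x => x - lam * f x) :=
    differentiable_id.sub (hf.const_mul lam)
  have hg : Monotone (fun x => x - lam * f x) := by
    apply monotone_of_deriv_nonneg hgdiff
    intro x
    have hd : deriv (fun x => x - lam * f x) x = 1 - lam * deriv f x := by
      rw [deriv_fun_sub (f := fun y => y) differentiableAt_id ((hf x).const_mul lam), deriv_id'',
        deriv_const_mul lam (hf x)]
    rw [hd]
    linarith [hcfl x]
  -- key scalar identity
  have keyC : ∀ v w : ℝ,
      |v - w - lam * (f v - f w)| + lam * |f v - f w| = |v - w| := by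
    have main : ∀ v w : ℝ, w ≤ v →
        |v - w - lam * (f v - f w)| + lam * |f v - f w| = |v - w| := by
      intro v w hvw
      have h1 : f w ≤ f v := hmono hvw
      have h2 : w - lam * f w ≤ v - lam * f v := hg hvw
      rw [abs_of_nonneg (by linarith), abs_of_nonneg (by linarith),
        abs_of_nonneg (by linarith)]
      ring
    intro v w
    rcases le_total w v with hv | hv
    · exact main v w hv
    · have hm := main w v hv
      rw [show v - w - lam * (f v - f w) = -(w - v - lam * (f w - f v)) by ring,
        abs_neg, abs_sub_comm (f v) (f w), abs_sub_comm v w]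
      exact hm
  -- one-step estimate
  have step : ∀ n : ℕ,
      (∑ i : ZMod I, |𝒩 (n + 1) i - U (n + 1) i|) ≤
        (∑ i : ZMod I, |𝒩 n i - U n i|) + Δt * ∑ i : ZMod I, |ℐ n i| := by
    intro n
    have hN : ∀ i : ZMod I,
        𝒩 (n + 1) i = 𝒩 n i - lam * (f (𝒩 n i) - f (𝒩 n (i - 1))) + Δt * ℐ n i := by
      intro i
      rw [hℐ n i, hlam]
      field_simp
      ring
    have hi : ∀ i : ZMod I,
        |𝒩 (n + 1) i - U (n + 1) i| ≤
          (|𝒩 n i - U n i - lam * (f (𝒩 n i) - f (U n i))| +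
            lam * |f (𝒩 n (i - 1)) - f (U n (i - 1))|) + Δt * |ℐ n i| := by
      intro i
      rw [hN i, hU n i]
      have hre : 𝒩 n i - lam * (f (𝒩 n i) - f (𝒩 n (i - 1))) + Δt * ℐ n i -
          (U n i - lam * (f (U n i) - f (U n (i - 1)))) =
          (𝒩 n i - U n i - lam * (f (𝒩 n i) - f (U n i))) +
            lam * (f (𝒩 n (i - 1)) - f (U n (i - 1))) + Δt * ℐ n i := by ring
      rw [hre]
      calc |(𝒩 n i - U n i - lam * (f (𝒩 n i) - f (U n i))) +
            lam * (f (𝒩 n (i - 1)) - f (U n (i - 1))) + Δt * ℐ n i| ≤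
          |𝒩 n i - U n i - lam * (f (𝒩 n i) - f (U n i))| +
            |lam * (f (𝒩 n (i - 1)) - f (U n (i - 1)))| + |Δt * ℐ n i| :=
          abs_add_three _ _ _
        _ = (|𝒩 n i - U n i - lam * (f (𝒩 n i) - f (U n i))| +
            lam * |f (𝒩 n (i - 1)) - f (U n (i - 1))|) + Δt * |ℐ n i| := by
          rw [abs_mul, abs_mul, abs_of_pos hlam0, abs_of_pos hΔt]
    calc (∑ i : ZMod I, |𝒩 (n + 1) i - U (n + 1) i|) ≤
        ∑ i : ZMod I, ((|𝒩 n i - U n i - lam * (f (𝒩 n i) - f (U n i))| +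
          lam * |f (𝒩 n (i - 1)) - f (U n (i - 1))|) + Δt * |ℐ n i|) :=
        Finset.sum_le_sum fun i _ => hi i
      _ = (∑ i : ZMod I, |𝒩 n i - U n i - lam * (f (𝒩 n i) - f (U n i))|) +
          (∑ i : ZMod I, lam * |f (𝒩 n (i - 1)) - f (U n (i - 1))|) +
          Δt * ∑ i : ZMod I, |ℐ n i| := by
        rw [Finset.sum_add_distrib, Finset.sum_add_distrib, Finset.mul_sum]
      _ = (∑ i : ZMod I, |𝒩 n i - U n i - lam * (f (𝒩 n i) - f (U n i))|) +
          (∑ i : ZMod I, lam * |f (𝒩 n i) - f (U n i)|) +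
          Δt * ∑ i : ZMod I, |ℐ n i| := by
        congr 1
        congr 1
        exact Equiv.sum_comp (Equiv.subRight (1 : ZMod I))
          (fun i => lam * |f (𝒩 n i) - f (U n i)|)
      _ = (∑ i : ZMod I, |𝒩 n i - U n i|) + Δt * ∑ i : ZMod I, |ℐ n i| := by
        rw [← Finset.sum_add_distrib]
        congr 1
        exact Finset.sum_congr rfl fun i _ => keyC (𝒩 n i) (U n i)
  -- iterate
  have main : ∀ n : ℕ,
      (∑ i : ZMod I, |𝒩 n i - U n i|) ≤
        (∑ i : ZMod I, |𝒩 0 i - U 0 i|) +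
          Δt * ∑ m ∈ Finset.range n, ∑ i : ZMod I, |ℐ m i| := by
    intro n
    induction n with
    | zero => simp
    | succ n ih =>
      calc (∑ i : ZMod I, |𝒩 (n + 1) i - U (n + 1) i|) ≤
          (∑ i : ZMod I, |𝒩 n i - U n i|) + Δt * ∑ i : ZMod I, |ℐ n i| := step n
        _ ≤ (∑ i : ZMod I, |𝒩 0 i - U 0 i|) +
            Δt * (∑ m ∈ Finset.range n, ∑ i : ZMod I, |ℐ m i|) +
            Δt * ∑ i : ZMod I, |ℐ n i| := by linarith
        _ = (∑ i : ZMod I, |𝒩 0 i - U 0 i|) +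
            Δt * ∑ m ∈ Finset.range (n + 1), ∑ i : ZMod I, |ℐ m i| := by
          rw [Finset.sum_range_succ]; ring
  intro n
  -- abbreviations
  set B : ℕ → ℝ := fun m => (1 / (I : ℝ)) * ∑ i : ZMod I, |ℐ m i| with hB
  set C : ℕ → ℝ := fun m => (1 / (I : ℝ)) * ∑ i : ZMod I, (ℐ m i) ^ 2 with hC
  have hBnn : ∀ m, 0 ≤ B m := by
    intro m
    apply mul_nonneg (by positivity)
    exact Finset.sum_nonneg fun i _ => abs_nonneg _
  have hCnn : ∀ m, 0 ≤ C m := by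
    intro m
    apply mul_nonneg (by positivity)
    exact Finset.sum_nonneg fun i _ => sq_nonneg _
  -- Cauchy–Schwarz in space: B m ^ 2 ≤ C m
  have hBC : ∀ m, B m ^ 2 ≤ C m := by
    intro m
    have cs := Finset.sum_mul_sq_le_sq_mul_sq Finset.univ
      (fun _ : ZMod I => (1 : ℝ)) (fun i => |ℐ m i|)
    simp only [one_mul, one_pow, Finset.sum_const, Finset.card_univ, ZMod.card,
      nsmul_eq_mul, mul_one, sq_abs] at cs
    have hcs : (∑ i : ZMod I, |ℐ m i|) ^ 2 ≤ (I : ℝ) * ∑ i : ZMod I, (ℐ m i) ^ 2 := cs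
    show ((1 / (I : ℝ)) * ∑ i : ZMod I, |ℐ m i|) ^ 2 ≤
      (1 / (I : ℝ)) * ∑ i : ZMod I, (ℐ m i) ^ 2
    have heq2 : (1 / (I : ℝ)) ^ 2 * ((I : ℝ) * ∑ i : ZMod I, (ℐ m i) ^ 2) =
        (1 / (I : ℝ)) * ∑ i : ZMod I, (ℐ m i) ^ 2 := by
      field_simp
    calc ((1 / (I : ℝ)) * ∑ i : ZMod I, |ℐ m i|) ^ 2
        = (1 / (I : ℝ)) ^ 2 * (∑ i : ZMod I, |ℐ m i|) ^ 2 := by ring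
      _ ≤ (1 / (I : ℝ)) ^ 2 * ((I : ℝ) * ∑ i : ZMod I, (ℐ m i) ^ 2) := by
          gcongr
      _ = (1 / (I : ℝ)) * ∑ i : ZMod I, (ℐ m i) ^ 2 := heq2
  -- Cauchy–Schwarz in time
  have hcsT : (∑ m ∈ Finset.range n, B m) ≤
      Real.sqrt n * Real.sqrt (∑ m ∈ Finset.range n, C m) := by
    have cs := Finset.sum_mul_sq_le_sq_mul_sq (Finset.range n)
      (fun _ => (1 : ℝ)) B
    simp only [one_mul, one_pow, Finset.sum_const, Finset.card_range,
      nsmul_eq_mul, mul_one] at cs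
    have h1 : (∑ m ∈ Finset.range n, B m) ^ 2 ≤ (n : ℝ) * ∑ m ∈ Finset.range n, C m := by
      calc (∑ m ∈ Finset.range n, B m) ^ 2 ≤ (n : ℝ) * ∑ m ∈ Finset.range n, B m ^ 2 := cs
        _ ≤ (n : ℝ) * ∑ m ∈ Finset.range n, C m := by
          apply mul_le_mul_of_nonneg_left _ (Nat.cast_nonneg n)
          exact Finset.sum_le_sum fun m _ => hBC m
    have h2 : (∑ m ∈ Finset.range n, B m) = Real.sqrt ((∑ m ∈ Finset.range n, B m) ^ 2) := by
      rw [Real.sqrt_sq (Finset.sum_nonneg fun m _ => hBnn m)]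
    rw [h2, ← Real.sqrt_mul (Nat.cast_nonneg n)]
    exact Real.sqrt_le_sqrt h1
  -- combine
  have hmain := main n
  have hstep1 : (1 / (I : ℝ)) * ∑ i : ZMod I, |𝒩 n i - U n i| ≤
      (1 / (I : ℝ)) * ∑ i : ZMod I, |𝒩 0 i - U 0 i| + Δt * ∑ m ∈ Finset.range n, B m := by
    have hmul := mul_le_mul_of_nonneg_left hmain
      (le_of_lt (by positivity : (0:ℝ) < 1 / (I:ℝ)))
    have hfold : ∑ m ∈ Finset.range n, B m =
        (1 / (I : ℝ)) * ∑ m ∈ Finset.range n, ∑ i : ZMod I, |ℐ m i| := by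
      rw [Finset.mul_sum]
    calc (1 / (I : ℝ)) * ∑ i : ZMod I, |𝒩 n i - U n i| ≤
        (1 / (I : ℝ)) * ((∑ i : ZMod I, |𝒩 0 i - U 0 i|) +
          Δt * ∑ m ∈ Finset.range n, ∑ i : ZMod I, |ℐ m i|) := hmul
      _ = (1 / (I : ℝ)) * ∑ i : ZMod I, |𝒩 0 i - U 0 i| +
          Δt * ∑ m ∈ Finset.range n, B m := by
        rw [hfold]
        ring
  have hfin : Δt * ∑ m ∈ Finset.range n, B m ≤
      Real.sqrt ((n : ℝ) * Δt) * Real.sqrt (Δt * ∑ m ∈ Finset.range n, C m) := by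
    have hSnn : 0 ≤ ∑ m ∈ Finset.range n, C m := Finset.sum_nonneg fun m _ => hCnn m
    have heq : Real.sqrt ((n : ℝ) * Δt) * Real.sqrt (Δt * ∑ m ∈ Finset.range n, C m) =
        Δt * (Real.sqrt n * Real.sqrt (∑ m ∈ Finset.range n, C m)) := by
      rw [← Real.sqrt_mul (by positivity), show (n : ℝ) * Δt * (Δt * ∑ m ∈ Finset.range n, C m)
          = Δt ^ 2 * ((n : ℝ) * ∑ m ∈ Finset.range n, C m) by ring,
        Real.sqrt_mul (by positivity), Real.sqrt_sq hΔt.le,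
        Real.sqrt_mul (Nat.cast_nonneg n)]
    rw [heq]
    exact mul_le_mul_of_nonneg_left hcsT hΔt.le
  calc (1 / (I : ℝ)) * ∑ i : ZMod I, |𝒩 n i - U n i| ≤
      (1 / (I : ℝ)) * ∑ i : ZMod I, |𝒩 0 i - U 0 i| + Δt * ∑ m ∈ Finset.range n, B m :=
      hstep1
    _ ≤ (1 / (I : ℝ)) * ∑ i : ZMod I, |𝒩 0 i - U 0 i| +
        Real.sqrt ((n : ℝ) * Δt) * Real.sqrt (Δt * ∑ m ∈ Finset.range n, C m) := by
      linarith
end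

section
/- Fix I ∈ ℕ with I ≥ 1, a mesh size h > 0, a time step Δt > 0, and set λ = Δt/h. Let f : ℝ → ℝ be differentiable. Let U : ℕ → (ZMod I → ℝ) satisfy the upwind scheme U^{n+1}_i = U^n_i − λ(f(U^n_i) − f(U^n_{i−1})), let 𝒩 : ℕ → (ZMod I → ℝ) have residual ℐ^n_i = (𝒩^{n+1}_i − 𝒩^n_i)/Δt + (f(𝒩^n_i) − f(𝒩^n_{i−1}))/h, and set E^n_i = 𝒩^n_i − U^n_i. Then for every n ∈ ℕ there exists η : ZMod I → ℝ with each η_i lying in the closed segment between 𝒩^n_i and U^n_i, such that for all i ∈ ZMod I: E^{n+1}_i = (1 − λ·f'(η_i))·E^n_i + λ·f'(η_{i−1})·E^n_{i−1} + Δt·ℐ^n_i. -/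
lemma mvt_segment (f : ℝ → ℝ) (hf : Differentiable ℝ f) (a b : ℝ) :
    ∃ η ∈ Set.Icc (min a b) (max a b), f b - f a = deriv f η * (b - a) := by
  rcases lt_trichotomy a b with hab | hab | hab
  · obtain ⟨c, hc, hc'⟩ := exists_deriv_eq_slope f hab hf.continuous.continuousOn
      (fun x _ => hf.differentiableAt.differentiableWithinAt)
    refine ⟨c, ⟨?_, ?_⟩, ?_⟩
    · exact le_trans (min_le_left _ _) hc.1.le
    · exact le_trans hc.2.le (le_max_right _ _)
    · rw [hc']; field_simp [sub_ne_zero.mpr hab.ne']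
  · exact ⟨a, ⟨min_le_left _ _, le_max_left _ _⟩, by rw [hab]; ring⟩
  · obtain ⟨c, hc, hc'⟩ := exists_deriv_eq_slope f hab hf.continuous.continuousOn
      (fun x _ => hf.differentiableAt.differentiableWithinAt)
    refine ⟨c, ⟨?_, ?_⟩, ?_⟩
    · exact le_trans (min_le_right _ _) hc.1.le
    · exact le_trans hc.2.le (le_max_left _ _)
    · rw [hc']; field_simp [sub_ne_zero.mpr hab.ne']; ring

/-- Mean-value representation of the error propagation for the upwind scheme:
the error `E = 𝒩 - U` satisfies
`E^{n+1}_i = (1 - λ f'(η_i)) E^n_i + λ f'(η_{i-1}) E^n_{i-1} + Δt ℐ^n_i`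
for some intermediate points `η_i` between `𝒩^n_i` and `U^n_i`. -/
theorem upwind_error_mean_value_representation
    (I : ℕ) [NeZero I] (hI : 1 ≤ I)
    (h Δt lam : ℝ) (hh : 0 < h) (hΔt : 0 < Δt) (hlam : lam = Δt / h)
    (f : ℝ → ℝ) (hf : Differentiable ℝ f)
    (U 𝒩 : ℕ → ZMod I → ℝ)
    (hU : ∀ (n : ℕ) (i : ZMod I),
      U (n + 1) i = U n i - lam * (f (U n i) - f (U n (i - 1))))
    (ℐ : ℕ → ZMod I → ℝ)
    (hℐ : ∀ (n : ℕ) (i : ZMod I),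
      ℐ n i = (𝒩 (n + 1) i - 𝒩 n i) / Δt + (f (𝒩 n i) - f (𝒩 n (i - 1))) / h)
    (E : ℕ → ZMod I → ℝ) (hE : ∀ (n : ℕ) (i : ZMod I), E n i = 𝒩 n i - U n i) :
    ∀ n : ℕ, ∃ η : ZMod I → ℝ, ∀ i : ZMod I,
      η i ∈ Set.Icc (min (𝒩 n i) (U n i)) (max (𝒩 n i) (U n i)) ∧
      E (n + 1) i =
        (1 - lam * deriv f (η i)) * E n i +
          lam * deriv f (η (i - 1)) * E n (i - 1) + Δt * ℐ n i := by
  intro n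
  choose η hη hη' using fun i => mvt_segment f hf (U n i) (𝒩 n i)
  refine ⟨η, fun i => ⟨by simpa [min_comm, max_comm] using hη i, ?_⟩⟩
  have key : ∀ j : ZMod I, f (𝒩 n j) - f (U n j) = deriv f (η j) * E n j := by
    intro j; rw [hE]; exact hη' j
  have hNi := 𝒩 (n + 1) i
  have hIeq : Δt * ℐ n i = (𝒩 (n + 1) i - 𝒩 n i)
      + lam * (f (𝒩 n i) - f (𝒩 n (i - 1))) := by
    rw [hℐ, hlam]; field_simp
  have e1 : E (n + 1) i = 𝒩 (n + 1) i - U (n + 1) i := hE _ _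
  rw [e1, hU]
  have k1 := key i
  have k2 := key (i - 1)
  have hEi : E n i = 𝒩 n i - U n i := hE _ _
  have hEi1 : E n (i - 1) = 𝒩 n (i - 1) - U n (i - 1) := hE _ _
  linear_combination -hIeq - lam * k1 + lam * k2 - hEi
end

section
/- Fix I ∈ ℕ with I ≥ 1, a mesh size h > 0, a time step Δt > 0, and set λ = Δt/h. Let f : ℝ → ℝ be differentiable with 0 ≤ f'(x) and λ·f'(x) ≤ 1 for every x ∈ ℝ. Let U, W : ℕ → (ZMod I → ℝ) both satisfy the upwind scheme, i.e. U^{n+1}_i = U^n_i − λ(f(U^n_i) − f(U^n_{i−1})) and W^{n+1}_i = W^n_i − λ(f(W^n_i) − f(W^n_{i−1})) for all n and i. Then the scheme is ℓ¹-contractive: for every n ∈ ℕ, (1/I)·Σ_{i ∈ ZMod I} |U^n_i − W^n_i| ≤ (1/I)·Σ_{i ∈ ZMod I} |U^0_i − W^0_i|. -/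
/-- Mean value property: for differentiable `f`, any secant slope is a derivative value. -/
lemma mvt_slope (f : ℝ → ℝ) (hf : Differentiable ℝ f) (u w : ℝ) :
    ∃ c : ℝ, f u - f w = deriv f c * (u - w) := by
  rcases lt_trichotomy u w with hlt | heq | hgt
  · obtain ⟨c, _, hc⟩ := exists_deriv_eq_slope f hlt hf.continuous.continuousOn
      (fun x _ => (hf x).differentiableWithinAt)
    refine ⟨c, ?_⟩
    rw [hc]; field_simp [sub_ne_zero.mpr hlt.ne']; ring
  · exact ⟨0, by rw [heq]; ring⟩
  · obtain ⟨c, _, hc⟩ := exists_deriv_eq_slope f hgt hf.continuous.continuousOn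
      (fun x _ => (hf x).differentiableWithinAt)
    refine ⟨c, ?_⟩
    rw [hc]; field_simp [sub_ne_zero.mpr hgt.ne']

/-- `ℓ¹`-contractivity of the upwind scheme under the CFL condition. -/
theorem upwind_l1_contraction
    (I : ℕ) [NeZero I] (hI : 1 ≤ I)
    (h Δt lam : ℝ) (hh : 0 < h) (hΔt : 0 < Δt) (hlam : lam = Δt / h)
    (f : ℝ → ℝ) (hf : Differentiable ℝ f)
    (hf' : ∀ x : ℝ, 0 ≤ deriv f x) (hcfl : ∀ x : ℝ, lam * deriv f x ≤ 1)
    (U W : ℕ → ZMod I → ℝ)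
    (hU : ∀ (n : ℕ) (i : ZMod I),
      U (n + 1) i = U n i - lam * (f (U n i) - f (U n (i - 1))))
    (hW : ∀ (n : ℕ) (i : ZMod I),
      W (n + 1) i = W n i - lam * (f (W n i) - f (W n (i - 1)))) :
    ∀ n : ℕ,
      (1 / (I : ℝ)) * ∑ i : ZMod I, |U n i - W n i| ≤
        (1 / (I : ℝ)) * ∑ i : ZMod I, |U 0 i - W 0 i| := by
  have hlam0 : 0 ≤ lam := by
    rw [hlam]; positivity
  have key : ∀ n : ℕ,
      ∑ i : ZMod I, |U (n+1) i - W (n+1) i| ≤ ∑ i : ZMod I, |U n i - W n i| := by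
    intro n
    -- choose MVT points for each cell
    have hc : ∀ i : ZMod I, ∃ c : ℝ,
        f (U n i) - f (W n i) = deriv f c * (U n i - W n i) :=
      fun i => mvt_slope f hf (U n i) (W n i)
    choose c hcspec using hc
    set g : ZMod I → ℝ := fun i => lam * deriv f (c i) with hg
    have hg0 : ∀ i, 0 ≤ g i := fun i => mul_nonneg hlam0 (hf' _)
    have hg1 : ∀ i, g i ≤ 1 := fun i => hcfl _
    set d : ZMod I → ℝ := fun i => U n i - W n i with hd
    have hstep : ∀ i : ZMod I,
        U (n+1) i - W (n+1) i = (1 - g i) * d i + g (i-1) * d (i-1) := by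
      intro i
      rw [hU, hW]
      have h1 := hcspec i
      have h2 := hcspec (i-1)
      simp only [hg, hd]
      nlinarith [h1, h2]
    have habs : ∀ i : ZMod I,
        |U (n+1) i - W (n+1) i| ≤ (1 - g i) * |d i| + g (i-1) * |d (i-1)| := by
      intro i
      rw [hstep i]
      calc |(1 - g i) * d i + g (i-1) * d (i-1)|
          ≤ |(1 - g i) * d i| + |g (i-1) * d (i-1)| := abs_add_le _ _
        _ = (1 - g i) * |d i| + g (i-1) * |d (i-1)| := by
            rw [abs_mul, abs_mul, abs_of_nonneg (by linarith [hg1 i]),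
              abs_of_nonneg (hg0 (i-1))]
    calc ∑ i : ZMod I, |U (n+1) i - W (n+1) i|
        ≤ ∑ i : ZMod I, ((1 - g i) * |d i| + g (i-1) * |d (i-1)|) :=
          Finset.sum_le_sum fun i _ => habs i
      _ = ∑ i : ZMod I, (1 - g i) * |d i| + ∑ i : ZMod I, g (i-1) * |d (i-1)| :=
          Finset.sum_add_distrib
      _ = ∑ i : ZMod I, (1 - g i) * |d i| + ∑ i : ZMod I, g i * |d i| := by
          congr 1
          exact Fintype.sum_equiv (Equiv.subRight (1 : ZMod I)) _ _ (fun i => rfl)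
      _ = ∑ i : ZMod I, |d i| := by
          rw [← Finset.sum_add_distrib]
          apply Finset.sum_congr rfl
          intro i _
          ring
  intro n
  induction n with
  | zero => exact le_refl _
  | succ m ih =>
    have : (0:ℝ) ≤ 1 / (I : ℝ) := by positivity
    calc (1 / (I : ℝ)) * ∑ i : ZMod I, |U (m+1) i - W (m+1) i|
        ≤ (1 / (I : ℝ)) * ∑ i : ZMod I, |U m i - W m i| :=
          mul_le_mul_of_nonneg_left (key m) this
      _ ≤ _ := ih
end
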